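/- For the sequence a with a_0 = 0, a_1 = 1, a_n = min{k < n : k + a_k ≥ n} (n ≥ 2): for every i ≥ 2, a_{i + a_{i-1}} = i. -/

import Mathlib

/-- The sequence defined by `a 0 = 0`, `a 1 = 1`, and for `n ≥ 2`,
`a n = min { k < n : m * k + a k ≥ n }` (for `m = 1` this is the sequence `a` of the paper). -/
noncomputable def jseq (m : ℕ) (n : ℕ) : ℕ :=
  Nat.strongRecOn n (fun n ih =>
    if n = 0 then 0
    else if n = 1 then 1
    else sInf {k : ℕ | ∃ h : k < n, n ≤ m * k + ih k h})

/-!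
Every value `k = a n` with `n ≥ 2` satisfies `k < n ≤ k + a k`, and `a` is positive and monotone.
For `N = i + a (i - 1)` the index `i` is admissible (`N ≤ i + a i`), so `a N ≤ i`; if `a N ≤ i - 1`
then monotonicity gives `a N + a (a N) ≤ (i - 1) + a (i - 1) < N`, contradicting admissibility
of `a N`.
-/

namespace Jseq

variable {m n k : ℕ}

lemma jseq_eq (m n : ℕ) : jseq m n =
    if n = 0 then 0 else if n = 1 then 1
    else sInf {k : ℕ | ∃ _ : k < n, n ≤ m * k + jseq m k} := by
  rw [jseq, Nat.strongRecOn_eq]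
  rfl

@[simp] lemma jseq_zero (m : ℕ) : jseq m 0 = 0 := by simp [jseq_eq m 0]

@[simp] lemma jseq_one (m : ℕ) : jseq m 1 = 1 := by simp [jseq_eq m 1]

lemma jseq_eq_sInf (hn : 2 ≤ n) :
    jseq m n = sInf {k : ℕ | ∃ _ : k < n, n ≤ m * k + jseq m k} := by
  rw [jseq_eq, if_neg (by omega), if_neg (by omega)]

lemma jseq_le_of_le_mul_add (hn : 2 ≤ n) (hk : k < n) (h : n ≤ m * k + jseq m k) :
    jseq m n ≤ k := by
  rw [jseq_eq_sInf hn]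
  exact Nat.sInf_le ⟨hk, h⟩

lemma jseq_lt_and_le_mul_add_of_exists (hn : 2 ≤ n) (h : ∃ k < n, n ≤ m * k + jseq m k) :
    jseq m n < n ∧ n ≤ m * jseq m n + jseq m (jseq m n) := by
  obtain ⟨k, hk, hkn⟩ := h
  rw [jseq_eq_sInf hn]
  obtain ⟨hlt, hle⟩ := Nat.sInf_mem (s := {k : ℕ | ∃ _ : k < n, n ≤ m * k + jseq m k}) ⟨k, hk, hkn⟩
  exact ⟨hlt, hle⟩

lemma jseq_pos (hm : 0 < m) (hn : 0 < n) : 0 < jseq m n := by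
  induction n using Nat.strong_induction_on with
  | _ n ih =>
    obtain rfl | hn2 : n = 1 ∨ 2 ≤ n := by omega
    · simp
    have hprev : 0 < jseq m (n - 1) := ih (n - 1) (by omega) (by omega)
    have hmul : n - 1 ≤ m * (n - 1) := Nat.le_mul_of_pos_left _ hm
    obtain ⟨-, hadm⟩ := jseq_lt_and_le_mul_add_of_exists (m := m) hn2 ⟨n - 1, by omega, by omega⟩
    rw [Nat.pos_iff_ne_zero]
    intro h0
    simp only [h0, mul_zero, jseq_zero] at hadm
    omega

lemma jseq_lt_and_le_mul_add (hm : 0 < m) (hn : 2 ≤ n) :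
    jseq m n < n ∧ n ≤ m * jseq m n + jseq m (jseq m n) := by
  have hprev : 0 < jseq m (n - 1) := jseq_pos hm (by omega)
  have hmul : n - 1 ≤ m * (n - 1) := Nat.le_mul_of_pos_left _ hm
  exact jseq_lt_and_le_mul_add_of_exists hn ⟨n - 1, by omega, by omega⟩

lemma jseq_monotone (hm : 0 < m) : Monotone (jseq m) := by
  refine monotone_nat_of_le_succ fun n => ?_
  obtain rfl | rfl | hn : n = 0 ∨ n = 1 ∨ 2 ≤ n := by omega
  · simp
  · exact (jseq_one m).trans_le (jseq_pos hm (n := 2) (by omega))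
  obtain ⟨hlt, hadm⟩ := jseq_lt_and_le_mul_add hm (n := n + 1) (by omega)
  obtain hk | hk : jseq m (n + 1) < n ∨ jseq m (n + 1) = n := by omega
  · exact jseq_le_of_le_mul_add hn hk (by omega)
  · obtain ⟨hlt', -⟩ := jseq_lt_and_le_mul_add hm hn
    omega

end Jseq

open Jseq in
/-- For every `i ≥ 2`, `a (i + a (i-1)) = i`. -/
theorem jseq_add_pred (i : ℕ) (hi : 2 ≤ i) : jseq 1 (i + jseq 1 (i - 1)) = i := by
  have hprev : 0 < jseq 1 (i - 1) := jseq_pos one_pos (by omega)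
  have hmono := jseq_monotone (m := 1) one_pos
  have hstep : jseq 1 (i - 1) ≤ jseq 1 i := hmono (Nat.sub_le i 1)
  set N := i + jseq 1 (i - 1)
  have hle : jseq 1 N ≤ i := jseq_le_of_le_mul_add (by omega) (by omega) (by omega)
  obtain ⟨-, hadm⟩ := jseq_lt_and_le_mul_add one_pos (n := N) (by omega)
  by_contra hne
  have : jseq 1 (jseq 1 N) ≤ jseq 1 (i - 1) := hmono (by omega)
  omega
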